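/- arXiv:2311.08926 — 3 statements merged into one kernel-verified Lean document; each statement's English description precedes it below -/
import Mathlib

section
/- Let M be a model category and J' a set of weakly generating trivial cofibrations that permits the small object argument. If f : A → B is a trivial cofibration and B is fibrant, then f is a retract of a morphism in J'-cof_reg; in particular f lies in J'-cof (the class of retracts of transfinite compositions of cobase changes of morphisms in J'). -/
open CategoryTheory CategoryTheory.Limits

universe w v u

namespace Paper

variable {C : Type u} [Category.{v} C]

/-- `Δ(I)`: morphisms `f : A ⟶ B` such that there is `h : B ⟶ Z` with `h ∈ I` and `h ∘ f ∈ I`. -/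
def Delta (I : MorphismProperty C) : MorphismProperty C :=
  fun _A B f => ∃ (Z : C) (h : B ⟶ Z), I h ∧ I (f ≫ h)

/-- The class of cobase changes (pushouts) of morphisms in `I`. -/
def Pushouts (I : MorphismProperty C) : MorphismProperty C :=
  fun X Y g => ∃ (A B : C) (f : A ⟶ B) (u : A ⟶ X) (v : B ⟶ Y), I f ∧ IsPushout u f g v

/-- `f` is a retract of `g` in the arrow category. -/
def IsRetractOf {X Y X' Y' : C} (f : X ⟶ Y) (g : X' ⟶ Y') : Prop :=
  ∃ (i : Arrow.mk f ⟶ Arrow.mk g) (r : Arrow.mk g ⟶ Arrow.mk f), i ≫ r = 𝟙 _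

/-- Closure of a class of morphisms under retracts. -/
def RetractClosure (I : MorphismProperty C) : MorphismProperty C :=
  fun _X _Y f => ∃ (X' Y' : C) (g : X' ⟶ Y'), I g ∧ IsRetractOf f g

/-- The class of morphisms with the right lifting property against all of `J`. -/
def RLP (J : MorphismProperty C) : MorphismProperty C :=
  fun _X _Y p => ∀ ⦃A B : C⦄ (i : A ⟶ B), J i → HasLiftingProperty i p

/-- Index types for transfinite compositions: well-ordered, with bottom and top. -/
class ChainIndex (J : Type w) extends LinearOrder J, SuccOrder J, OrderBot J, OrderTop J where
  wf : WellFoundedLT J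

attribute [instance] ChainIndex.wf

/-- The inclusion functor `Set.Iio m ⥤ J`. -/
def iioFunctor {J : Type w} [LinearOrder J] (m : J) : Set.Iio m ⥤ J :=
  Monotone.functor (f := fun x : Set.Iio m => (x : J)) (fun _ _ h => h)

/-- The canonical cocone on the restriction of `F` to `Set.Iio m`, with apex `F.obj m`. -/
def iioCocone {J : Type w} [LinearOrder J] (F : J ⥤ C) (m : J) :
    Cocone (iioFunctor m ⋙ F) where
  pt := F.obj m
  ι :=
    { app := fun j => F.map (homOfLE j.2.le)
      naturality := fun j k g => by
        dsimp [iioFunctor]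
        rw [← F.map_comp, Category.comp_id]
        rfl }

/-- `f` is a transfinite composition of a chain of morphisms each lying in `P`. -/
def IsTransfiniteCompositionOfBody (P : MorphismProperty C) {A B : C} (f : A ⟶ B)
    (J : Type w) [ChainIndex J] : Prop :=
  ∃ (F : J ⥤ C) (e₀ : F.obj ⊥ ≅ A) (e₁ : F.obj ⊤ ≅ B),
    (e₀.inv ≫ F.map (homOfLE bot_le) ≫ e₁.hom = f) ∧
    (∀ j : J, j < ⊤ → P (F.map (homOfLE (Order.le_succ j)))) ∧
    (∀ m : J, Order.IsSuccLimit m → Nonempty (IsColimit (iioCocone F m)))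

/-- `f` is a transfinite composition of morphisms from `P`. -/
def IsTransfiniteCompositionOf (P : MorphismProperty C) {A B : C} (f : A ⟶ B) : Prop :=
  ∃ (J : Type w) (inst : ChainIndex J),
    @IsTransfiniteCompositionOfBody C _ P A B f J inst

/-- `I-cof_reg`: transfinite compositions of cobase changes of morphisms from `I`. -/
def CofReg (I : MorphismProperty C) : MorphismProperty C :=
  fun _X _Y f => IsTransfiniteCompositionOf.{w} (Pushouts I) f

/-- `I-cof`: retracts of morphisms in `I-cof_reg`. -/
def Cof (I : MorphismProperty C) : MorphismProperty C :=
  RetractClosure (CofReg.{w} I)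

/-- A model structure on a category `C`. -/
structure ModelStructure (C : Type u) [Category.{v} C] where
  W : MorphismProperty C
  Cofib : MorphismProperty C
  Fib : MorphismProperty C
  w_comp : ∀ {X Y Z : C} (f : X ⟶ Y) (g : Y ⟶ Z), W f → W g → W (f ≫ g)
  w_cancel_left : ∀ {X Y Z : C} (f : X ⟶ Y) (g : Y ⟶ Z), W f → W (f ≫ g) → W g
  w_cancel_right : ∀ {X Y Z : C} (f : X ⟶ Y) (g : Y ⟶ Z), W g → W (f ≫ g) → W f
  w_retract : ∀ {X Y X' Y' : C} (f : X ⟶ Y) (g : X' ⟶ Y'), W g → IsRetractOf f g → W f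
  cof_retract : ∀ {X Y X' Y' : C} (f : X ⟶ Y) (g : X' ⟶ Y'), Cofib g → IsRetractOf f g → Cofib f
  fib_retract : ∀ {X Y X' Y' : C} (f : X ⟶ Y) (g : X' ⟶ Y'), Fib g → IsRetractOf f g → Fib f
  lift : ∀ {A B X Y : C} (i : A ⟶ B) (p : X ⟶ Y), Cofib i → Fib p → (W i ∨ W p) →
    HasLiftingProperty i p
  fact₁ : ∀ {X Y : C} (f : X ⟶ Y), ∃ (Z : C) (i : X ⟶ Z) (p : Z ⟶ Y),
    Cofib i ∧ W i ∧ Fib p ∧ i ≫ p = f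
  fact₂ : ∀ {X Y : C} (f : X ⟶ Y), ∃ (Z : C) (i : X ⟶ Z) (p : Z ⟶ Y),
    Cofib i ∧ Fib p ∧ W p ∧ i ≫ p = f


/-- a trivial cofibration with fibrant codomain is a retract of a morphism in
`J'-cof_reg`, hence lies in `J'-cof`. -/
theorem stmt4 {C : Type u} [Category.{v} C] [HasTerminal C] (M : ModelStructure C)
    (J' : MorphismProperty C)
    (hJ'tc : ∀ ⦃A B : C⦄ (j : A ⟶ B), J' j → M.Cofib j ∧ M.W j)
    (hWG : ∀ ⦃A B : C⦄ (g : A ⟶ B), RLP J' g → M.Fib (terminal.from B) → M.Fib g)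
    (hSOA : ∀ ⦃X Y : C⦄ (g : X ⟶ Y), ∃ (Z : C) (i : X ⟶ Z) (p : Z ⟶ Y),
      CofReg.{w} J' i ∧ RLP J' p ∧ i ≫ p = g)
    {A B : C} (f : A ⟶ B) (hfc : M.Cofib f) (hfw : M.W f)
    (hB : M.Fib (terminal.from B)) :
    (∃ (X' Y' : C) (g : X' ⟶ Y'), CofReg.{w} J' g ∧ IsRetractOf f g) ∧ Cof.{w} J' f := by
  obtain ⟨Z, i, p, hi, hp, hfac⟩ := hSOA f
  have hpf : M.Fib p := hWG p hp hB
  have hlp : HasLiftingProperty f p := M.lift f p hfc hpf (Or.inl hfw)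
  have sq : CommSq i f p (𝟙 B) := ⟨by simp [hfac]⟩
  obtain ⟨⟨q, hq1, hq2⟩⟩ := (hlp.sq_hasLift sq)
  have hret : IsRetractOf f i := by
    refine ⟨Arrow.homMk (u := 𝟙 A) (v := q) (by simpa using hq1.symm),
      Arrow.homMk (u := 𝟙 A) (v := p) (by simpa using hfac.symm), ?_⟩
    ext
    · simp
    · simpa using hq2
  exact ⟨⟨A, Z, i, hi, hret⟩, ⟨A, Z, i, hi, hret⟩⟩

end Paper
end

section
/- Let M be a model category, and suppose we have a commutative triangle f : X → Y, p : X → Z, q : Y → Z with q ∘ f = p, where p is a fibration, f is a weak equivalence, and q is a fibration in a left Bousfield localization L_S M of M (same cofibrations, more weak equivalences). Then p is a fibration in L_S M. -/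
open CategoryTheory CategoryTheory.Limits

universe w v u

namespace Paper

variable {C : Type u} [Category.{v} C]

/-!
Factor `f = j ≫ r` in `M` with `j` an acyclic cofibration and `r` a fibration, which is acyclic
by two-out-of-three. Lifting `j` against `p` exhibits `p` as a retract of `r ≫ q`. An `L`-acyclic
cofibration is an `M`-cofibration, so it lifts against `r` in `M` and against `q` in `L`, hence
against `r ≫ q` and against its retract `p`; by the retract argument `p` is an `L`-fibration.
-/

lemma isRetractOf_of_fac_of_hasLiftingProperty {X Y Z : C} {i : X ⟶ Y} {g : Y ⟶ Z} {p : X ⟶ Z}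
    (h : i ≫ g = p) [HasLiftingProperty i p] : IsRetractOf p g :=
  let e := RetractArrow.ofRightLiftingProperty h
  ⟨e.i, e.r, e.retract⟩

lemma IsRetractOf.hasLiftingProperty {A B X Y X' Y' : C} {p : X ⟶ Y} {g : X' ⟶ Y'}
    (h : IsRetractOf p g) (i : A ⟶ B) [HasLiftingProperty i g] : HasLiftingProperty i p := by
  obtain ⟨e, r, hr⟩ := h
  exact RetractArrow.rightLiftingProperty ⟨e, r, hr⟩ i

lemma ModelStructure.fib_of_hasLiftingProperty (M : ModelStructure C) {X Y : C} (p : X ⟶ Y)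
    (h : ∀ ⦃A B : C⦄ (i : A ⟶ B), M.Cofib i → M.W i → HasLiftingProperty i p) : M.Fib p := by
  obtain ⟨_, i, q, hi, hiW, hq, hfac⟩ := M.fact₁ p
  have := h i hi hiW
  exact M.fib_retract p q hq (isRetractOf_of_fac_of_hasLiftingProperty hfac)

theorem stmt10_general {C : Type u} [Category.{v} C] (M L : ModelStructure C)
    (hcof : ∀ ⦃X Y : C⦄ (f : X ⟶ Y), M.Cofib f ↔ L.Cofib f)
    {X Y Z : C} (f : X ⟶ Y) (p : X ⟶ Z) (q : Y ⟶ Z) (hcomm : f ≫ q = p)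
    (hp : M.Fib p) (hf : M.W f) (hq : L.Fib q) :
    L.Fib p := by
  obtain ⟨_, j, r, hj, hjW, hr, rfl⟩ := M.fact₁ f
  have hrW : M.W r := M.w_cancel_left j r hjW hf
  have : HasLiftingProperty j p := M.lift j p hj hp (.inl hjW)
  have hpr : IsRetractOf p (r ≫ q) :=
    isRetractOf_of_fac_of_hasLiftingProperty (i := j) (by rw [← hcomm, Category.assoc])
  refine L.fib_of_hasLiftingProperty p fun A B i hi hiW => ?_
  have : HasLiftingProperty i r := M.lift i r ((hcof i).2 hi) hr (.inr hrW)
  have : HasLiftingProperty i q := L.lift i q hi hq (.inl hiW)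
  exact hpr.hasLiftingProperty i

/-- in a commutative triangle `q ∘ f = p` with `p` a fibration in `M`,
`f` a weak equivalence in `M` and `q` a fibration in the localization, `p` is a fibration
in the localization. -/
theorem stmt10 {C : Type u} [Category.{v} C] (M L : ModelStructure C)
    (hcof : ∀ ⦃X Y : C⦄ (f : X ⟶ Y), M.Cofib f ↔ L.Cofib f)
    (hW : ∀ ⦃X Y : C⦄ (f : X ⟶ Y), M.W f → L.W f)
    {X Y Z : C} (f : X ⟶ Y) (p : X ⟶ Z) (q : Y ⟶ Z) (hcomm : f ≫ q = p)
    (hp : M.Fib p) (hf : M.W f) (hq : L.Fib q) :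
    L.Fib p :=
  stmt10_general M L hcof f p q hcomm hp hf hq

end Paper
end

section
/- Let M be a model category and L_S M a left Bousfield localization of M (same underlying category, same cofibrations, larger weak equivalences, and such that the identity functor M → M is right Quillen from L_S M to M). If p : X → Y is a fibration in M and both X and Y are fibrant in L_S M, then p is a fibration in L_S M. -/
open CategoryTheory CategoryTheory.Limits

universe w v u

namespace Paper

variable {C : Type u} [Category.{v} C]

/-- Identities are weak equivalences in any model structure. -/
lemma w_id {C : Type u} [Category.{v} C] (S : ModelStructure C) (X : C) : S.W (𝟙 X) := by
  obtain ⟨Z, i, p, hic, hiw, hpf, hcomp⟩ := S.fact₁ (𝟙 X)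
  refine S.w_retract _ i hiw
    ⟨Arrow.homMk (u := 𝟙 X) (v := i) (by simp),
     Arrow.homMk (u := 𝟙 X) (v := p) (by simp [hcomp]), ?_⟩
  ext
  · simp
  · simpa using hcomp

/-- Fibrations are closed under composition in any model structure. -/
lemma fib_comp {C : Type u} [Category.{v} C] (S : ModelStructure C) {X Y Z : C}
    (p : X ⟶ Y) (q : Y ⟶ Z) (hp : S.Fib p) (hq : S.Fib q) : S.Fib (p ≫ q) := by
  obtain ⟨Z', i, t, hic, hiw, htf, hcomp⟩ := S.fact₁ (p ≫ q)
  haveI h1 : HasLiftingProperty i p := S.lift i p hic hp (Or.inl hiw)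
  haveI h2 : HasLiftingProperty i q := S.lift i q hic hq (Or.inl hiw)
  haveI h3 : HasLiftingProperty i (p ≫ q) := inferInstance
  have sq : CommSq (𝟙 X) i (p ≫ q) t := ⟨by simp [hcomp]⟩
  obtain ⟨⟨l⟩⟩ := h3.sq_hasLift sq
  refine S.fib_retract _ t htf
    ⟨Arrow.homMk (u := i) (v := 𝟙 Z) (by simp [hcomp]),
     Arrow.homMk (u := l.l) (v := 𝟙 Z) (by simpa using l.fac_right), ?_⟩
  ext
  · simpa using l.fac_left
  · simp

/-- a fibration of `M` between fibrant objects of the localization is a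
fibration in the localization. -/
theorem stmt11 {C : Type u} [Category.{v} C] [HasTerminal C] (M L : ModelStructure C)
    (hcof : ∀ ⦃X Y : C⦄ (f : X ⟶ Y), M.Cofib f ↔ L.Cofib f)
    (hW : ∀ ⦃X Y : C⦄ (f : X ⟶ Y), M.W f → L.W f)
    (hRQ : ∀ ⦃X Y : C⦄ (f : X ⟶ Y), L.Fib f → M.Fib f)
    (hRQ' : ∀ ⦃X Y : C⦄ (f : X ⟶ Y), L.Fib f → L.W f → M.Fib f ∧ M.W f)
    {X Y : C} (p : X ⟶ Y) (hp : M.Fib p)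
    (hX : L.Fib (terminal.from X)) (hY : L.Fib (terminal.from Y)) :
    L.Fib p := by
  -- Factor `p = j ≫ q` in `L` with `j` a trivial cofibration and `q` a fibration.
  obtain ⟨Z, j, q, hjc, hjw, hqf, hpq⟩ := L.fact₁ p
  -- `Z` is fibrant in `L`.
  have hZ : L.Fib (terminal.from Z) := by
    have hE : terminal.from Z = q ≫ terminal.from Y := by apply terminal.hom_ext
    rw [hE]
    exact fib_comp L q _ hqf hY
  -- A retraction `r : Z ⟶ X` of `j`.
  haveI hlift1 : HasLiftingProperty j (terminal.from X) := L.lift _ _ hjc hX (Or.inl hjw)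
  have sq1 : CommSq (𝟙 X) j (terminal.from X) (terminal.from Z) := ⟨by apply terminal.hom_ext⟩
  obtain ⟨⟨l1⟩⟩ := hlift1.sq_hasLift sq1
  set r : Z ⟶ X := l1.l with hr_def
  have hr : j ≫ r = 𝟙 X := l1.fac_left
  -- `r` is an `L`-weak equivalence.
  have hrw : L.W r := L.w_cancel_left j r hjw (by rw [hr]; exact w_id L X)
  -- Factor `r = a ≫ b` in `L` with `a` a cofibration, `b` a trivial fibration.
  obtain ⟨V, a, b, hac, hbf, hbw, hab⟩ := L.fact₂ r
  have hbM : M.Fib b ∧ M.W b := hRQ' b hbf hbw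
  have haw : L.W a := L.w_cancel_right a b hbw (by rw [hab]; exact hrw)
  -- A retraction `s : V ⟶ Z` of `a`.
  haveI hlift2 : HasLiftingProperty a (terminal.from Z) := L.lift _ _ hac hZ (Or.inl haw)
  have sq2 : CommSq (𝟙 Z) a (terminal.from Z) (terminal.from V) := ⟨by apply terminal.hom_ext⟩
  obtain ⟨⟨l2⟩⟩ := hlift2.sq_hasLift sq2
  set s : V ⟶ Z := l2.l with hs_def
  have hs : a ≫ s = 𝟙 Z := l2.fac_left
  -- `j ≫ a` is an `M`-weak equivalence since `(j ≫ a) ≫ b = 𝟙 X`.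
  have h1 : (j ≫ a) ≫ b = 𝟙 X := by rw [Category.assoc, hab, hr]
  have hja : M.W (j ≫ a) := M.w_cancel_right _ b hbM.2 (by rw [h1]; exact w_id M X)
  -- `j` is a retract of `j ≫ a`, hence an `M`-weak equivalence.
  have hjM : M.W j := by
    refine M.w_retract j (j ≫ a) hja
      ⟨Arrow.homMk (u := 𝟙 X) (v := a) (by simp),
       Arrow.homMk (u := 𝟙 X) (v := s) (by simp [hs]),
       ?_⟩
    ext
    · simp
    · simpa using hs
  -- Lift in the square `(𝟙 X, q)` for `j` against `p` (in `M`).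
  haveI hlift3 : HasLiftingProperty j p := M.lift j p ((hcof j).mpr hjc) hp (Or.inl hjM)
  have sq3 : CommSq (𝟙 X) j p q := ⟨by rw [Category.id_comp, hpq]⟩
  obtain ⟨⟨l3⟩⟩ := hlift3.sq_hasLift sq3
  -- Hence `p` is a retract of `q`, which is an `L`-fibration.
  refine L.fib_retract p q hqf
    ⟨Arrow.homMk (u := j) (v := 𝟙 Y) (by simp [hpq]),
     Arrow.homMk (u := l3.l) (v := 𝟙 Y) (by simpa using l3.fac_right), ?_⟩
  ext
  · simpa using l3.fac_left
  · simp

end Paper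
end
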